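/- arXiv:1703.04274 — 6 statements merged into one kernel-verified Lean document; each statement's English description precedes it below -/
import Mathlib

section
/- Let E be a real Hilbert space, ψ : E → ℝ a differentiable convex function, and W ⊆ E a nonempty closed convex set. Let w ∈ E and let v ∈ W be a Bregman projection of w onto W, i.e. Δψ(v, w) ≤ Δψ(x, w) for every x ∈ W. Then for every u ∈ W, Δψ(u, w) ≥ Δψ(u, v) + Δψ(v, w). -/
open RealInnerProductSpace

/-- **Pythagorean theorem for Bregman divergences.**
If `v ∈ W` is a Bregman projection of `w` onto the nonempty closed convex set `W`
(with respect to a differentiable convex `ψ`), then for every `u ∈ W`,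
`Δψ(u, w) ≥ Δψ(u, v) + Δψ(v, w)`. -/
theorem bregman_pythagorean
    {E : Type*} [NormedAddCommGroup E] [InnerProductSpace ℝ E] [CompleteSpace E]
    (ψ : E → ℝ) (ψ' : E → E) (hψ : ∀ x, HasGradientAt ψ (ψ' x) x)
    (hψconv : ConvexOn ℝ Set.univ ψ)
    (W : Set E) (hWne : W.Nonempty) (hWcl : IsClosed W) (hWconv : Convex ℝ W)
    (Dψ : E → E → ℝ) (hD : ∀ x y, Dψ x y = ψ x - ψ y - ⟪ψ' y, x - y⟫)
    (w : E) (v : E) (hvW : v ∈ W)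
    (hproj : ∀ x ∈ W, Dψ v w ≤ Dψ x w) :
    ∀ u ∈ W, Dψ u w ≥ Dψ u v + Dψ v w := by
  intro u huW
  -- the function g x = Dψ x w has a minimum at v over W
  set g : E → ℝ := fun x => ψ x - ⟪ψ' w, x⟫ with hg
  have hmin : IsLocalMinOn g W v := by
    apply IsMinOn.localize
    intro x hx
    have := hproj x hx
    simp only [hD, inner_sub_right] at this
    simpa [g, Set.mem_setOf_eq] using by linarith
  have hfd : HasFDerivAt g ((InnerProductSpace.toDual ℝ E (ψ' v) : E →L[ℝ] ℝ)
      - (innerSL ℝ (ψ' w))) v := by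
    exact ((hψ v).hasFDerivAt).sub ((innerSL ℝ (ψ' w)).hasFDerivAt)
  have htc : u - v ∈ posTangentConeAt W v :=
    sub_mem_posTangentConeAt_of_segment_subset (hWconv.segment_subset hvW huW)
  have hkey := hmin.hasFDerivWithinAt_nonneg (hfd.hasFDerivWithinAt) htc
  have hkey' : (0:ℝ) ≤ ⟪ψ' v, u - v⟫ - ⟪ψ' w, u - v⟫ := by
    simpa using hkey
  have h1 := hD u w
  have h2 := hD u v
  have h3 := hD v w
  have e1 : ⟪ψ' w, u - w⟫ = ⟪ψ' w, u - v⟫ + ⟪ψ' w, v - w⟫ := by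
    rw [← inner_add_right, sub_add_sub_cancel]
  nlinarith [hkey']
end

section
/- Let n ≥ 1, let G > 0, and let g ∈ ℝⁿ with Σ_{i=1}^n |g_i| ≤ G. Let 0 < η < 1/(√2·G). Let w ∈ ℝⁿ be a probability vector (w_i ≥ 0 for all i and Σ_{i=1}^n w_i = 1), and define w′ ∈ ℝⁿ by w′_i = w_i·exp(−η·g_i) / Σ_{j=1}^n w_j·exp(−η·g_j). Then Σ_{i=1}^n |w_i − w′_i| ≤ 3·η·G. -/
lemma exp_sub_one_bound (x : ℝ) (hx : |x| ≤ 1 / Real.sqrt 2) :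
    |Real.exp x - 1| ≤ 1.5 * |x| := by
  have hs : (0:ℝ) < Real.sqrt 2 := by positivity
  have hs2 : Real.sqrt 2 ^ 2 = 2 := Real.sq_sqrt (by norm_num)
  have hs1 : (1.2:ℝ) < Real.sqrt 2 := by nlinarith
  have hx1 : |x| ≤ 1 := by
    have : 1 / Real.sqrt 2 ≤ 1 := by rw [div_le_one hs]; nlinarith
    linarith
  have hb := Real.exp_bound hx1 (by norm_num : 0 < 3)
  have hsum : ∑ i ∈ Finset.range 3, x ^ i / (Nat.factorial i) = 1 + x + x^2/2 := by
    simp [Finset.sum_range_succ, Nat.factorial]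
  rw [hsum] at hb
  have hb' : |Real.exp x - (1 + x + x^2/2)| ≤ |x|^3 * (2/9) := by
    refine hb.trans ?_
    norm_num [Nat.factorial]
  have hx2 : x^2 ≤ 1/2 := by
    have : |x|^2 ≤ (1 / Real.sqrt 2)^2 := by
      apply pow_le_pow_left₀ (abs_nonneg x) hx
    rw [sq_abs] at this
    rw [div_pow, hs2] at this
    linarith
  have h3 : |x|^3 ≤ |x| * (1/2) := by
    have : |x|^3 = |x| * |x|^2 := by ring
    rw [this, sq_abs]
    exact mul_le_mul_of_nonneg_left hx2 (abs_nonneg x)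
  have hxx : x^2/2 ≤ |x| * (1/(2*Real.sqrt 2)) := by
    have : x^2 = |x| * |x| := by rw [← sq_abs]; ring
    rw [this]
    have h2 : |x| * |x| ≤ |x| * (1/Real.sqrt 2) :=
      mul_le_mul_of_nonneg_left hx (abs_nonneg x)
    calc |x| * |x| / 2 ≤ |x| * (1/Real.sqrt 2) / 2 := by linarith
      _ = |x| * (1/(2*Real.sqrt 2)) := by ring
  have htri : |Real.exp x - 1| ≤ |Real.exp x - (1 + x + x^2/2)| + (|x| + x^2/2) := by
    have h1 : |Real.exp x - 1| ≤ |Real.exp x - (1 + x + x^2/2)| + |x + x^2/2| := by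
      have := abs_sub_le (Real.exp x) (1 + x + x^2/2) 1
      calc |Real.exp x - 1| ≤ |Real.exp x - (1 + x + x^2/2)| + |(1 + x + x^2/2) - 1| := this
        _ = |Real.exp x - (1 + x + x^2/2)| + |x + x^2/2| := by ring_nf
    refine h1.trans ?_
    have : |x + x^2/2| ≤ |x| + x^2/2 := by
      refine (abs_add_le _ _).trans ?_
      simp [abs_of_nonneg (by positivity : (0:ℝ) ≤ x^2/2)]
    linarith
  have hfin : 1/(2*Real.sqrt 2) + 2/9 * (1/2) ≤ 0.5 := by
    rw [div_add' _ _ _ (by positivity), div_le_iff₀ (by positivity)]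
    nlinarith
  calc |Real.exp x - 1| ≤ |x|^3 * (2/9) + (|x| + x^2/2) := by linarith
    _ ≤ |x| * (1/2) * (2/9) + (|x| + |x| * (1/(2*Real.sqrt 2))) := by
        have := mul_le_mul_of_nonneg_right h3 (by norm_num : (0:ℝ) ≤ 2/9)
        linarith
    _ = |x| * (1 + (1/(2*Real.sqrt 2) + 2/9 * (1/2))) := by ring
    _ ≤ |x| * (1 + 0.5) := by
        apply mul_le_mul_of_nonneg_left _ (abs_nonneg x)
        linarith
    _ = 1.5 * |x| := by ring

/-- **Bound on the distance between consecutive multiplicative-weights iterates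
(Lemma 4, negative entropy mirror map).** For a probability vector `w` on `n`
coordinates, a gradient `g` with `‖g‖₁ ≤ G`, and a step size `0 < η < 1/(√2·G)`,
the multiplicative-weights update `w'` satisfies `‖w - w'‖₁ ≤ 3·η·G`. -/
theorem multiplicative_weights_consecutive_iterates_bound
    (n : ℕ) (hn : 1 ≤ n)
    (G : ℝ) (hG : 0 < G)
    (g : Fin n → ℝ) (hg : ∑ i, |g i| ≤ G)
    (η : ℝ) (hη : 0 < η) (hη' : η < 1 / (Real.sqrt 2 * G))
    (w : Fin n → ℝ) (hw : ∀ i, 0 ≤ w i) (hw1 : ∑ i, w i = 1)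
    (w' : Fin n → ℝ)
    (hw' : ∀ i, w' i = w i * Real.exp (-η * g i) / ∑ j, w j * Real.exp (-η * g j)) :
    ∑ i, |w i - w' i| ≤ 3 * η * G := by
  have hs : (0:ℝ) < Real.sqrt 2 := by positivity
  set Z : ℝ := ∑ j, w j * Real.exp (-η * g j) with hZdef
  have hZ : 0 < Z := by
    have hex : ∃ i ∈ Finset.univ (α := Fin n), 0 < w i := by
      by_contra h
      push_neg at h
      have : ∀ i ∈ Finset.univ (α := Fin n), w i = 0 :=
        fun i hi => le_antisymm (h i hi) (hw i)
      have := Finset.sum_eq_zero this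
      rw [hw1] at this; norm_num at this
    exact Finset.sum_pos' (fun i _ => mul_nonneg (hw i) (Real.exp_pos _).le)
      (hex.imp fun i ⟨hi, hpi⟩ => ⟨hi, mul_pos hpi (Real.exp_pos _)⟩)
  have hηG : η * G < 1 / Real.sqrt 2 := by
    rw [lt_div_iff₀ (by positivity)] at hη' ⊢
    nlinarith
  -- per-coordinate gradient bound
  have hgi : ∀ i, |g i| ≤ G := fun i =>
    le_trans (Finset.single_le_sum (f := fun j => |g j|)
      (fun j _ => abs_nonneg _) (Finset.mem_univ i)) hg
  have hxbound : ∀ i, |(-η * g i)| ≤ 1 / Real.sqrt 2 := by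
    intro i
    rw [abs_mul, abs_neg, abs_of_pos hη]
    exact le_trans (mul_le_mul_of_nonneg_left (hgi i) hη.le) hηG.le
  have hkey : ∀ i, |1 - Real.exp (-η * g i)| ≤ 1.5 * (η * |g i|) := by
    intro i
    rw [abs_sub_comm]
    have := exp_sub_one_bound (-η * g i) (hxbound i)
    rwa [abs_mul, abs_neg, abs_of_pos hη] at this
  set S : ℝ := ∑ i, w i * |1 - Real.exp (-η * g i)| with hSdef
  have hSb : S ≤ 1.5 * η * G := by
    have h1 : S ≤ ∑ i, w i * (1.5 * (η * |g i|)) :=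
      Finset.sum_le_sum fun i _ => mul_le_mul_of_nonneg_left (hkey i) (hw i)
    have hw_le : ∀ i, w i ≤ 1 := by
      intro i
      rw [← hw1]
      exact Finset.single_le_sum (fun j _ => hw j) (Finset.mem_univ i)
    have h2 : ∑ i, w i * (1.5 * (η * |g i|)) ≤ ∑ i, 1.5 * η * |g i| := by
      refine Finset.sum_le_sum fun i _ => ?_
      have : w i * (1.5 * (η * |g i|)) ≤ 1 * (1.5 * (η * |g i|)) :=
        mul_le_mul_of_nonneg_right (hw_le i) (by positivity)
      linarith
    have h3 : ∑ i, 1.5 * η * |g i| = 1.5 * η * ∑ i, |g i| := by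
      rw [Finset.mul_sum]
    have h4 : 1.5 * η * ∑ i, |g i| ≤ 1.5 * η * G :=
      mul_le_mul_of_nonneg_left hg (by positivity)
    linarith
  have h1Z : |1 - Z| ≤ S := by
    have : 1 - Z = ∑ i, w i * (1 - Real.exp (-η * g i)) := by
      have e : ∑ i, w i * (1 - Real.exp (-η * g i)) = (∑ i, w i) - Z := by
        rw [hZdef, ← Finset.sum_sub_distrib]
        exact Finset.sum_congr rfl fun i _ => by ring
      rw [e, hw1]
    rw [this]
    refine (Finset.abs_sum_le_sum_abs _ _).trans ?_
    refine le_of_eq (Finset.sum_congr rfl fun i _ => ?_)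
    rw [abs_mul, abs_of_nonneg (hw i)]
  have hterm : ∀ i, |w i - w' i| ≤
      w i * |1 - Real.exp (-η * g i)| + w i * Real.exp (-η * g i) * (|1 - Z| / Z) := by
    intro i
    rw [hw' i]
    have hsplit : w i - w i * Real.exp (-η * g i) / Z
        = w i * (1 - Real.exp (-η * g i)) + w i * Real.exp (-η * g i) * ((Z - 1) / Z) := by
      field_simp
      ring
    rw [hsplit]
    refine (abs_add_le _ _).trans ?_
    have e1 : |w i * (1 - Real.exp (-η * g i))| = w i * |1 - Real.exp (-η * g i)| := by
      rw [abs_mul, abs_of_nonneg (hw i)]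
    have e2 : |w i * Real.exp (-η * g i) * ((Z - 1) / Z)|
        = w i * Real.exp (-η * g i) * (|1 - Z| / Z) := by
      rw [abs_mul, abs_of_nonneg (mul_nonneg (hw i) (Real.exp_pos _).le),
        abs_div, abs_of_pos hZ, abs_sub_comm]
    rw [e1, e2]
  calc ∑ i, |w i - w' i|
      ≤ ∑ i, (w i * |1 - Real.exp (-η * g i)| + w i * Real.exp (-η * g i) * (|1 - Z| / Z)) :=
        Finset.sum_le_sum fun i _ => hterm i
    _ = S + (∑ i, w i * Real.exp (-η * g i)) * (|1 - Z| / Z) := by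
        rw [Finset.sum_add_distrib, ← Finset.sum_mul]
    _ = S + |1 - Z| := by
        rw [← hZdef]
        field_simp
    _ ≤ S + S := by linarith
    _ ≤ 3 * η * G := by linarith
end

section
/- Let E be a real Hilbert space and ψ : E → ℝ a differentiable function that is 1-strongly convex. Let η > 0, G > 0, and let g, w, v ∈ E with ‖g‖ ≤ G and ∇ψ(v) = ∇ψ(w) − η·g. Then for every u ∈ E, Δψ(w, v) − Δψ(u, v) ≤ η²·G²/2. -/
open RealInnerProductSpace

/-- If `ψ` is differentiable and 1-strongly convex and `∇ψ(v) = ∇ψ(w) - η·g` with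
`‖g‖ ≤ G`, then for every `u`, `Δψ(w, v) - Δψ(u, v) ≤ η²·G²/2`. -/
theorem bregman_step_bound
    {E : Type*} [NormedAddCommGroup E] [InnerProductSpace ℝ E] [CompleteSpace E]
    (ψ : E → ℝ) (ψ' : E → E) (hψ : ∀ x, HasGradientAt ψ (ψ' x) x)
    (hsc : ∀ x y : E, ψ x + ⟪ψ' x, y - x⟫ + ‖y - x‖ ^ 2 / 2 ≤ ψ y)
    (Dψ : E → E → ℝ) (hD : ∀ x y, Dψ x y = ψ x - ψ y - ⟪ψ' y, x - y⟫)
    (η G : ℝ) (hη : 0 < η) (hG : 0 < G)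
    (g w v : E) (hg : ‖g‖ ≤ G)
    (hupd : ψ' v = ψ' w - η • g) :
    ∀ u : E, Dψ w v - Dψ u v ≤ η ^ 2 * G ^ 2 / 2 := by
  intro u
  have h1 := hsc w u
  have hcs : ⟪g, w - u⟫ ≤ ‖g‖ * ‖w - u‖ := real_inner_le_norm g (w - u)
  have key : Dψ w v - Dψ u v = ψ w - ψ u - ⟪ψ' w, w - u⟫ + η * ⟪g, w - u⟫ := by
    rw [hD, hD, hupd]
    have e1 : (w : E) - u = (w - v) - (u - v) := by abel
    rw [show ⟪ψ' w, w - u⟫ = ⟪ψ' w, w - v⟫ - ⟪ψ' w, u - v⟫ by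
          rw [e1, inner_sub_right],
        show ⟪g, w - u⟫ = ⟪g, w - v⟫ - ⟪g, u - v⟫ by
          rw [e1, inner_sub_right]]
    simp [inner_sub_left, real_inner_smul_left]
    ring
  have h2 : ⟪ψ' w, u - w⟫ = -⟪ψ' w, w - u⟫ := by
    rw [show (u : E) - w = -(w - u) by abel, inner_neg_right]
  have h3 : ‖u - w‖ = ‖w - u‖ := norm_sub_rev u w
  rw [key]
  nlinarith [sq_nonneg (η * G - ‖w - u‖), norm_nonneg (w - u),
    mul_le_mul_of_nonneg_right hg (norm_nonneg (w - u)),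
    mul_le_mul_of_nonneg_left hcs hη.le]
end

section
/- Let E be a real Hilbert space, ψ : E → ℝ a differentiable 1-strongly convex function, and W ⊆ E a nonempty closed convex set. Let η > 0, G > 0, let w ∈ W and g ∈ E with ‖g‖ ≤ G, let v ∈ E satisfy ∇ψ(v) = ∇ψ(w) − η·g, and let w⁺ ∈ W be a Bregman projection of v onto W, i.e. Δψ(w⁺, v) ≤ Δψ(x, v) for all x ∈ W. Then for every w* ∈ W, ⟪w − w*, g⟫ ≤ (1/η)·(Δψ(w*, w) − Δψ(w*, w⁺)) + η·G²/2. -/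
/-!
The first-order optimality condition of the Bregman projection `w⁺`, combined with the
three-point identity, gives the generalized Pythagorean inequality
`Δ(w*, w⁺) + Δ(w⁺, v) ≤ Δ(w*, v)`. The three-point identity also rewrites `η⟪g, w - w*⟫` as
`Δ(w*, w) - Δ(w*, v) + Δ(w, v)`, and the remaining excess
`Δ(w, v) - Δ(w⁺, v) = η⟪g, w - w⁺⟫ - Δ(w⁺, w)` is at most `η²G²/2` by Young's inequality,
since strong convexity gives `Δ(w⁺, w) ≥ ‖w - w⁺‖²/2`.
-/

open RealInnerProductSpace

theorem IsMinOn.inner_gradient_nonneg {E : Type*} [NormedAddCommGroup E] [InnerProductSpace ℝ E]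
    [CompleteSpace E] {f : E → ℝ} {f' : E} {s : Set E} {a y : E} (h : IsMinOn f s a)
    (hf : HasGradientAt f f' a) (hs : Convex ℝ s) (ha : a ∈ s) (hy : y ∈ s) :
    0 ≤ ⟪f', y - a⟫ := by
  simpa using h.localize.hasFDerivWithinAt_nonneg hf.hasFDerivAt.hasFDerivWithinAt
    (sub_mem_posTangentConeAt_of_segment_subset (hs.segment_subset ha hy))

section Bregman

variable {E : Type*} [NormedAddCommGroup E] [InnerProductSpace ℝ E]

def bregmanDiv (ψ : E → ℝ) (ψ' : E → E) (x y : E) : ℝ :=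
  ψ x - ψ y - ⟪ψ' y, x - y⟫

theorem bregmanDiv_add_bregmanDiv_sub (ψ : E → ℝ) (ψ' : E → E) (x y z : E) :
    bregmanDiv ψ ψ' x y + bregmanDiv ψ ψ' y z - bregmanDiv ψ ψ' x z =
      ⟪ψ' y - ψ' z, y - x⟫ := by
  simp only [bregmanDiv, inner_sub_left, inner_sub_right]
  ring

theorem hasGradientAt_bregmanDiv [CompleteSpace E] {ψ : E → ℝ} {ψ' : E → E} {x : E}
    (hψ : HasGradientAt ψ (ψ' x) x) (y : E) :
    HasGradientAt (bregmanDiv ψ ψ' · y) (ψ' x - ψ' y) x := by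
  rw [hasGradientAt_iff_hasFDerivAt, map_sub]
  refine (hψ.hasFDerivAt.sub_const _).sub ?_
  exact ((hasFDerivAt_const (ψ' y) x).inner ℝ ((hasFDerivAt_id x).sub_const y)).congr_fderiv
    (by ext; simp)

theorem bregmanDiv_add_bregmanDiv_le_of_isMinOn [CompleteSpace E] {ψ : E → ℝ} {ψ' : E → E}
    {s : Set E} {p x y : E} (hψ : HasGradientAt ψ (ψ' p) p) (hs : Convex ℝ s) (hp : p ∈ s)
    (hmin : IsMinOn (bregmanDiv ψ ψ' · y) s p) (hx : x ∈ s) :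
    bregmanDiv ψ ψ' x p + bregmanDiv ψ ψ' p y ≤ bregmanDiv ψ ψ' x y := by
  have hopt := hmin.inner_gradient_nonneg (hasGradientAt_bregmanDiv hψ y) hs hp hx
  have hthree := bregmanDiv_add_bregmanDiv_sub ψ ψ' x p y
  rw [← neg_sub x p, inner_neg_right] at hthree
  linarith

end Bregman

theorem real_inner_le_half_sq_add_half_sq {E : Type*} [NormedAddCommGroup E]
    [InnerProductSpace ℝ E] (x y : E) : ⟪x, y⟫ ≤ ‖x‖ ^ 2 / 2 + ‖y‖ ^ 2 / 2 := by
  nlinarith [norm_sub_sq_real x y, sq_nonneg ‖x - y‖]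

theorem mirror_descent_per_step_regret_general
    {E : Type*} [NormedAddCommGroup E] [InnerProductSpace ℝ E] [CompleteSpace E]
    (ψ : E → ℝ) (ψ' : E → E) (hψ : ∀ x, HasGradientAt ψ (ψ' x) x)
    (hsc : ∀ x y : E, ψ x + ⟪ψ' x, y - x⟫ + ‖y - x‖ ^ 2 / 2 ≤ ψ y)
    (W : Set E) (hWconv : Convex ℝ W)
    (Dψ : E → E → ℝ) (hD : ∀ x y, Dψ x y = ψ x - ψ y - ⟪ψ' y, x - y⟫)
    (η G : ℝ) (hη : 0 < η)
    (w : E)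
    (g : E) (hg : ‖g‖ ≤ G)
    (v : E) (hupd : ψ' v = ψ' w - η • g)
    (wplus : E) (hwplusW : wplus ∈ W)
    (hproj : ∀ x ∈ W, Dψ wplus v ≤ Dψ x v) :
    ∀ wstar ∈ W,
      ⟪w - wstar, g⟫ ≤ (1 / η) * (Dψ wstar w - Dψ wstar wplus) + η * G ^ 2 / 2 := by
  intro wstar hwstar
  obtain rfl : Dψ = bregmanDiv ψ ψ' := funext₂ hD
  have hpyth := bregmanDiv_add_bregmanDiv_le_of_isMinOn (hψ wplus) hWconv hwplusW hproj hwstar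
  have hstep : ψ' w - ψ' v = η • g := by rw [hupd, sub_sub_cancel]
  have hregret := bregmanDiv_add_bregmanDiv_sub ψ ψ' wstar w v
  have hstab := bregmanDiv_add_bregmanDiv_sub ψ ψ' wplus w v
  rw [hstep, real_inner_smul_left] at hregret hstab
  have hstrong : ‖w - wplus‖ ^ 2 / 2 ≤ bregmanDiv ψ ψ' wplus w := by
    have := hsc w wplus
    rw [norm_sub_rev, bregmanDiv]
    linarith
  have hyoung := real_inner_le_half_sq_add_half_sq (η • g) (w - wplus)
  rw [real_inner_smul_left] at hyoung
  have hηg : ‖η • g‖ ^ 2 ≤ η ^ 2 * G ^ 2 := by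
    rw [norm_smul, Real.norm_of_nonneg hη.le, mul_pow]
    gcongr
  have key : η * ⟪g, w - wstar⟫ ≤
      bregmanDiv ψ ψ' wstar w - bregmanDiv ψ ψ' wstar wplus + η ^ 2 * G ^ 2 / 2 := by
    linarith
  rw [real_inner_comm, one_div_mul_eq_div, ← sub_le_iff_le_add, le_div_iff₀ hη]
  linarith

/-- **Per-step regret inequality of online mirror descent.** With `ψ` differentiable
and 1-strongly convex, `w ∈ W`, `‖g‖ ≤ G`, `∇ψ(v) = ∇ψ(w) - η·g`, and `w⁺ ∈ W` a
Bregman projection of `v` onto `W`, for every `w* ∈ W`: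
`⟪w - w*, g⟫ ≤ (1/η)·(Δψ(w*, w) - Δψ(w*, w⁺)) + η·G²/2`. -/
theorem mirror_descent_per_step_regret
    {E : Type*} [NormedAddCommGroup E] [InnerProductSpace ℝ E] [CompleteSpace E]
    (ψ : E → ℝ) (ψ' : E → E) (hψ : ∀ x, HasGradientAt ψ (ψ' x) x)
    (hsc : ∀ x y : E, ψ x + ⟪ψ' x, y - x⟫ + ‖y - x‖ ^ 2 / 2 ≤ ψ y)
    (W : Set E) (hWne : W.Nonempty) (hWcl : IsClosed W) (hWconv : Convex ℝ W)
    (Dψ : E → E → ℝ) (hD : ∀ x y, Dψ x y = ψ x - ψ y - ⟪ψ' y, x - y⟫)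
    (η G : ℝ) (hη : 0 < η) (hG : 0 < G)
    (w : E) (hwW : w ∈ W)
    (g : E) (hg : ‖g‖ ≤ G)
    (v : E) (hupd : ψ' v = ψ' w - η • g)
    (wplus : E) (hwplusW : wplus ∈ W)
    (hproj : ∀ x ∈ W, Dψ wplus v ≤ Dψ x v) :
    ∀ wstar ∈ W,
      ⟪w - wstar, g⟫ ≤ (1 / η) * (Dψ wstar w - Dψ wstar wplus) + η * G ^ 2 / 2 :=
  mirror_descent_per_step_regret_general ψ ψ' hψ hsc W hWconv Dψ hD η G hη w g hg v hupd wplus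
    hwplusW hproj
end

section
/- For every integer n ≥ 1, the uniform average over all sign vectors ε ∈ {−1,+1}ⁿ satisfies 2^{−n} · Σ_{ε ∈ {−1,+1}ⁿ} |Σ_{i=1}^n ε_i| ≥ √n / √2. -/
/-!
Grouping the sign vectors by their number `k` of `+1` entries turns the sum into
`∑ₖ C(n,k) |2k - n|`. Since `C(n,k) (n - 2k) = n (C(n-1,k) - C(n-1,k-1))` telescopes, this sum
equals `2n C(n-1, ⌊n/2⌋)` exactly, and the claim becomes `4ⁿ ≤ 8n C(n-1, ⌊n/2⌋)²`. Both parities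
of `n` reduce to the Wallis-type bound `16ᵐ ≤ 4m C(2m,m)²`, which follows by induction from
`(m+1) C(2m+2,m+1) = 2(2m+1) C(2m,m)` and `4m(m+1) ≤ (2m+1)²`.
-/

open Finset

section SignVectors

variable {ι : Type*} [DecidableEq ι]

def signVector (A : Finset ι) (i : ι) : ℝ := if i ∈ A then 1 else -1

theorem signVector_injective : Function.Injective (signVector (ι := ι)) := by
  intro A B h
  ext i
  have := congrFun h i
  by_cases hA : i ∈ A <;> by_cases hB : i ∈ B <;> simp_all [signVector] <;> norm_num at this

variable [Fintype ι]

theorem piFinset_signs_eq_image_signVector :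
    Fintype.piFinset (fun _ : ι => ({-1, 1} : Finset ℝ)) = univ.powerset.image signVector := by
  ext ε
  simp only [Fintype.mem_piFinset, mem_insert, mem_singleton, mem_image, mem_powerset,
    subset_univ, true_and]
  constructor
  · intro hε
    refine ⟨univ.filter (ε · = 1), funext fun i => ?_⟩
    rcases hε i with h | h <;> simp [signVector, h]; norm_num
  · rintro ⟨A, rfl⟩ i
    by_cases h : i ∈ A <;> simp [signVector, h]

theorem sum_signVector (A : Finset ι) : ∑ i, signVector A i = 2 * #A - Fintype.card ι := by
  have h : ∀ i, signVector A i = 2 * (if i ∈ A then 1 else 0) - 1 := fun i => by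
    by_cases hi : i ∈ A <;> simp [signVector, hi]; norm_num
  simp only [h, sum_sub_distrib, ← mul_sum, sum_boole, filter_mem_eq_inter, univ_inter,
    sum_const, card_univ, nsmul_eq_mul, mul_one]

theorem sum_piFinset_signs_eq_sum_choose {M : Type*} [AddCommMonoid M] (f : ℝ → M) :
    ∑ ε ∈ Fintype.piFinset (fun _ : ι => ({-1, 1} : Finset ℝ)), f (∑ i, ε i) =
      ∑ k ∈ range (Fintype.card ι + 1),
        (Fintype.card ι).choose k • f (2 * k - Fintype.card ι) := by
  rw [piFinset_signs_eq_image_signVector, sum_image fun A _ B _ h => signVector_injective h]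
  simp only [sum_signVector]
  rw [sum_powerset_apply_card (fun k => f (2 * k - Fintype.card ι)), card_univ]

end SignVectors

theorem sum_range_choose_mul_sub_two_mul (m K : ℕ) :
    ∑ k ∈ range (K + 1), ((m + 1).choose k : ℝ) * (m + 1 - 2 * k) = (m + 1) * m.choose K := by
  induction K with
  | zero => simp
  | succ K ih =>
    have pascal : ((m + 1).choose (K + 1) : ℝ) = m.choose K + m.choose (K + 1) := by
      exact_mod_cast Nat.choose_succ_succ' m K
    have absorb : ((m + 1 : ℕ) : ℝ) * m.choose K = (m + 1).choose (K + 1) * (K + 1 : ℕ) := by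
      exact_mod_cast Nat.add_one_mul_choose_eq m K
    push_cast at absorb
    rw [sum_range_succ, ih]
    push_cast
    linear_combination (m + 1 : ℝ) * pascal + 2 * absorb

theorem sum_range_choose_mul_abs_two_mul_sub (n : ℕ) :
    ∑ k ∈ range (n + 1), (n.choose k : ℝ) * |2 * (k : ℝ) - n| =
      2 * n * (n - 1).choose (n / 2) := by
  obtain _ | m := n
  · simp
  set x : ℕ → ℝ := fun k => m + 1 - 2 * k
  have abs_eq (k : ℕ) : |2 * (k : ℝ) - (m + 1 : ℕ)| = 2 * max (x k) 0 - x k := by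
    rw [abs_sub_comm, Nat.cast_succ]
    change |x k| = _
    rcases le_total 0 (x k) with h | h
    · rw [abs_of_nonneg h, max_eq_left h]; ring
    · rw [abs_of_nonpos h, max_eq_right h]; ring
  have balanced : ∑ k ∈ range (m + 2), ((m + 1).choose k : ℝ) * x k = 0 := by
    simp [x, sum_range_choose_mul_sub_two_mul m (m + 1)]
  have positive_part : ∑ k ∈ range (m + 2), ((m + 1).choose k : ℝ) * max (x k) 0 =
      ∑ k ∈ range ((m + 1) / 2 + 1), ((m + 1).choose k : ℝ) * x k := by
    symm
    refine sum_subset_zero_on_sdiff (range_subset_range.2 (by omega)) (fun k hk => ?_)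
      (fun k hk => ?_)
    · have : (m + 1 : ℝ) < 2 * k := by
        norm_cast; simp only [mem_sdiff, mem_range] at hk; omega
      simp [x, this.le]
    · have : 2 * (k : ℝ) ≤ m + 1 := by
        norm_cast; simp only [mem_range] at hk; omega
      simp [x, this]
  calc ∑ k ∈ range (m + 2), ((m + 1).choose k : ℝ) * |2 * (k : ℝ) - (m + 1 : ℕ)|
      = 2 * ∑ k ∈ range (m + 2), ((m + 1).choose k : ℝ) * max (x k) 0 -
          ∑ k ∈ range (m + 2), ((m + 1).choose k : ℝ) * x k := by
        simp only [abs_eq, mul_sub, mul_sum, ← sum_sub_distrib]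
        ring_nf
    _ = 2 * (m + 1 : ℕ) * (m + 1 - 1).choose ((m + 1) / 2) := by
        rw [balanced, positive_part, sum_range_choose_mul_sub_two_mul]
        push_cast
        ring

theorem sixteen_pow_le_four_mul_mul_centralBinom_sq {m : ℕ} (hm : 0 < m) :
    16 ^ m ≤ 4 * m * m.centralBinom ^ 2 := by
  induction m, hm using Nat.le_induction with
  | base => decide
  | succ k hk ih =>
    have step := Nat.succ_mul_centralBinom_succ k
    refine Nat.le_of_mul_le_mul_left ?_ (by positivity : 0 < (k + 1) ^ 2)
    calc (k + 1) ^ 2 * 16 ^ (k + 1) = 16 * (k + 1) ^ 2 * 16 ^ k := by ring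
      _ ≤ 16 * (k + 1) ^ 2 * (4 * k * k.centralBinom ^ 2) := by gcongr
      _ ≤ 4 * (k + 1) * (2 * (2 * k + 1) * k.centralBinom) ^ 2 := by
          nlinarith [Nat.zero_le (k.centralBinom ^ 2)]
      _ = (k + 1) ^ 2 * (4 * (k + 1) * (k + 1).centralBinom ^ 2) := by
          rw [← step]; ring

theorem four_pow_le_eight_mul_mul_choose_half_sq {n : ℕ} (hn : 0 < n) :
    4 ^ n ≤ 8 * n * (n - 1).choose (n / 2) ^ 2 := by
  have four_pow_two_mul (m : ℕ) : 4 ^ (2 * m) = 16 ^ m := by rw [pow_mul]; norm_num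
  obtain ⟨m, rfl | rfl⟩ := Nat.even_or_odd' n
  · obtain ⟨j, rfl⟩ : ∃ j, m = j + 1 := ⟨m - 1, by omega⟩
    have halve : (j + 1).centralBinom = 2 * (2 * j + 1).choose (j + 1) := by
      rw [Nat.centralBinom_eq_two_mul_choose, show 2 * (j + 1) = 2 * j + 1 + 1 by ring,
        Nat.choose_succ_succ', Nat.choose_symm_half]
      ring
    rw [show 2 * (j + 1) - 1 = 2 * j + 1 by omega, show 2 * (j + 1) / 2 = j + 1 by omega,
      four_pow_two_mul]
    calc 16 ^ (j + 1) ≤ 4 * (j + 1) * (j + 1).centralBinom ^ 2 :=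
          sixteen_pow_le_four_mul_mul_centralBinom_sq j.succ_pos
      _ = 8 * (2 * (j + 1)) * (2 * j + 1).choose (j + 1) ^ 2 := by rw [halve]; ring
  · rw [show (2 * m + 1 - 1) = 2 * m by omega, show (2 * m + 1) / 2 = m by omega, pow_succ,
      four_pow_two_mul, ← Nat.centralBinom_eq_two_mul_choose]
    rcases Nat.eq_zero_or_pos m with rfl | hm
    · decide
    · nlinarith [sixteen_pow_le_four_mul_mul_centralBinom_sq hm]

theorem khintchine_lower_bound_general (n : ℕ) :
    Real.sqrt n / Real.sqrt 2 ≤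
      ((2 : ℝ) ^ n)⁻¹ *
        ∑ ε ∈ Fintype.piFinset (fun _ : Fin n => ({-1, 1} : Finset ℝ)),
          |∑ i, ε i| := by
  rcases Nat.eq_zero_or_pos n with rfl | hn
  · simp
  rw [sum_piFinset_signs_eq_sum_choose (f := abs)]
  simp only [Fintype.card_fin, nsmul_eq_mul]
  rw [sum_range_choose_mul_abs_two_mul_sub, ← Real.sqrt_div n.cast_nonneg,
    Real.sqrt_le_left (by positivity)]
  have key : (4 : ℝ) ^ n ≤ 8 * n * ((n - 1).choose (n / 2) : ℝ) ^ 2 := by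
    exact_mod_cast four_pow_le_eight_mul_mul_choose_half_sq hn
  have two_pow_sq : ((2 : ℝ) ^ n) ^ 2 = 4 ^ n := by rw [← pow_mul, mul_comm, pow_mul]; norm_num
  rw [mul_pow, inv_pow, two_pow_sq, div_le_iff₀ two_pos]
  field_simp
  nlinarith [n.cast_nonneg (α := ℝ)]

/-- **Lower Khintchine inequality for Rademacher sums with unit coefficients.**
Averaging over all sign vectors `ε ∈ {-1,+1}ⁿ`,
`2⁻ⁿ · Σ_ε |Σ_i ε_i| ≥ √n / √2`. -/
theorem khintchine_lower_bound (n : ℕ) (hn : 1 ≤ n) :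
    Real.sqrt n / Real.sqrt 2 ≤
      ((2 : ℝ) ^ n)⁻¹ *
        ∑ ε ∈ Fintype.piFinset (fun _ : Fin n => ({-1, 1} : Finset ℝ)),
          |∑ i, ε i| :=
  khintchine_lower_bound_general n
end

section
/- Let n, K, M, τ ≥ 1 be integers with 3M ≤ τ and 3K ≤ τ, and set T = n·K. Let σ be a permutation of {0, 1, …, T−1} with |σ(t) − t| ≤ M for all t, and for u ∈ {0, …, T−1} let block(u) = ⌊u/K⌋ ∈ {0, …, n−1}. For each t ∈ {0, …, T−1}, let w_t : {−1,+1}ⁿ → [−1, 1] be a function such that w_t(ε) = w_t(ε′) whenever ε_b = ε′_b for every b of the form b = block(σ⁻¹(s)) with s ≤ t − τ (i.e. w_t depends only on the signs of blocks whose losses were revealed at least τ rounds before t). Then 2^{−n} · Σ_{ε ∈ {−1,+1}ⁿ} ( Σ_{t=0}^{T−1} ε_{block(σ⁻¹(t))} · w_t(ε) + K·|Σ_{i=0}^{n−1} ε_i| ) ≥ K·√n/√2. -/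
/-!
The learner's terms average to zero: since `K ≥ 1` and both the permutation window and the
block length are at most `τ/3`, every loss revealed by time `t - τ` lies in a different block
from the loss played at time `t`. Flipping the sign of that block therefore leaves `w_t`
unchanged while negating `ε_b · w_t(ε)`. What remains is `K · E|ε_1 + ⋯ + ε_n|`, and with
`S_n = ε_1 + ⋯ + ε_n` one has `E|S_{n+1}| ≥ E|S_n| + P(S_n = 0)` and
`P(S_{2m} = 0) = C(2m, m)/4^m ≥ √(m+1) - √m`. Telescoping gives
`E|S_n| ≥ √⌈n/2⌉ ≥ √(n/2)`.
-/

open Finset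

theorem Nat.sixteen_pow_le_centralBinom_sq_mul (m : ℕ) :
    16 ^ m ≤ m.centralBinom ^ 2 * (4 * m + 1) := by
  induction m with
  | zero => simp
  | succ m ih =>
    have hrec := Nat.succ_mul_centralBinom_succ m
    refine Nat.le_of_mul_le_mul_left ?_ (pow_pos m.succ_pos 2)
    calc (m + 1) ^ 2 * 16 ^ (m + 1) = 16 * (m + 1) ^ 2 * 16 ^ m := by ring
      _ ≤ 16 * (m + 1) ^ 2 * (m.centralBinom ^ 2 * (4 * m + 1)) := by gcongr
      _ ≤ (2 * (2 * m + 1) * m.centralBinom) ^ 2 * (4 * (m + 1) + 1) := by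
        nlinarith [Nat.zero_le (m.centralBinom ^ 2)]
      _ = (m + 1) ^ 2 * ((m + 1).centralBinom ^ 2 * (4 * (m + 1) + 1)) := by
        rw [← hrec]; ring

theorem Nat.four_pow_le_centralBinom_mul_sqrt (m : ℕ) :
    (4 : ℝ) ^ m ≤ m.centralBinom * √(4 * m + 1) := by
  rw [← pow_le_pow_iff_left₀ (by positivity) (by positivity) two_ne_zero, mul_pow,
    Real.sq_sqrt (by positivity), ← pow_mul, mul_comm m, pow_mul]
  exact_mod_cast Nat.sixteen_pow_le_centralBinom_sq_mul m

theorem Real.sqrt_add_one_sub_sqrt_le {x : ℝ} (hx : 0 ≤ x) :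
    √(x + 1) - √x ≤ 1 / √(4 * x + 1) := by
  have hx' : √x ^ 2 = x := Real.sq_sqrt hx
  have hx1 : √(x + 1) ^ 2 = x + 1 := Real.sq_sqrt (by linarith)
  have hmono : √x * √x ≤ √x * √(x + 1) :=
    mul_le_mul_of_nonneg_left (Real.sqrt_le_sqrt (by linarith)) (Real.sqrt_nonneg x)
  have hpos : 0 < √x + √(x + 1) := by positivity
  have hconj : √(x + 1) - √x = 1 / (√x + √(x + 1)) := by
    rw [eq_div_iff hpos.ne']; nlinarith
  have hle : √(4 * x + 1) ≤ √x + √(x + 1) :=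
    Real.sqrt_le_iff.mpr ⟨hpos.le, by nlinarith⟩
  rw [hconj]
  exact one_div_le_one_div_of_le (by positivity) hle

theorem Real.sqrt_le_sum_centralBinom_div_four_pow (k : ℕ) :
    √k ≤ ∑ m ∈ range k, (m.centralBinom : ℝ) / 4 ^ m := by
  have htelescope := sum_range_sub (fun m : ℕ => √(m : ℝ)) k
  push_cast at htelescope
  calc √k = ∑ m ∈ range k, (√((m : ℝ) + 1) - √m) := by simp [htelescope]
    _ ≤ _ := sum_le_sum fun m _ => (Real.sqrt_add_one_sub_sqrt_le m.cast_nonneg).trans <| by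
        rw [div_le_div_iff₀ (by positivity) (by positivity), one_mul]
        exact Nat.four_pow_le_centralBinom_mul_sqrt m

theorem sum_piFinset_mul_eq_zero_of_neg_mem {ι : Type*} [Fintype ι] [DecidableEq ι]
    {s : Finset ℝ} (hs : ∀ x ∈ s, -x ∈ s) (b : ι) {f : (ι → ℝ) → ℝ}
    (hf : ∀ ε, f (Function.update ε b (-ε b)) = f ε) :
    ∑ ε ∈ Fintype.piFinset fun _ => s, ε b * f ε = 0 := by
  set flip : (ι → ℝ) → ι → ℝ := fun ε => Function.update ε b (-ε b)
  have hflip_mem : ∀ ε ∈ Fintype.piFinset (fun _ => s), flip ε ∈ Fintype.piFinset fun _ => s := by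
    simp only [Fintype.mem_piFinset]
    intro ε hε j
    rcases eq_or_ne j b with rfl | hj
    · simpa [flip] using hs _ (hε j)
    · simpa [flip, hj] using hε j
  have hflip_flip : ∀ ε, flip (flip ε) = ε := fun ε => by simp [flip]
  have hneg : ∑ ε ∈ Fintype.piFinset fun _ => s, ε b * f ε =
      ∑ ε ∈ Fintype.piFinset fun _ => s, -(ε b * f ε) :=
    sum_nbij' flip flip hflip_mem hflip_mem (fun ε _ => hflip_flip ε) (fun ε _ => hflip_flip ε)
      fun ε _ => by simp [flip, hf]
  rw [sum_neg_distrib] at hneg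
  linarith

noncomputable def signVectors (n : ℕ) : Finset (Fin n → ℝ) :=
  Fintype.piFinset fun _ => {-1, 1}

theorem sum_signVectors_succ {β : Type*} [AddCommMonoid β] (n : ℕ) (g : (Fin (n + 1) → ℝ) → β) :
    ∑ ε ∈ signVectors (n + 1), g ε =
      ∑ ε ∈ signVectors n, (g (Fin.cons 1 ε) + g (Fin.cons (-1) ε)) := by
  have h := filter_piFinset_eq_map_consEquiv (fun _ : Fin (n + 1) => ({-1, 1} : Finset ℝ))
    (fun _ => True)
  rw [filter_true, filter_true] at h
  rw [signVectors, h, sum_map, sum_product, sum_comm]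
  refine sum_congr rfl fun ε _ => ?_
  rw [sum_pair (by norm_num), add_comm]
  rfl

theorem centralBinom_le_card_sum_eq_zero (m : ℕ) :
    m.centralBinom ≤ #{ε ∈ signVectors (2 * m) | ∑ i, ε i = 0} := by
  calc m.centralBinom = #(powersetCard m (univ : Finset (Fin (2 * m)))) := by
        simp [Nat.centralBinom_eq_two_mul_choose]
    _ ≤ _ := by
      refine card_le_card_of_injOn (fun s i => if i ∈ s then 1 else -1) ?_ ?_
      · intro s hs
        rw [mem_coe, mem_powersetCard] at hs
        have hcompl : #({i | i ∉ s} : Finset (Fin (2 * m))) = m := by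
          rw [filter_not, filter_mem_eq_inter, univ_inter, card_sdiff_of_subset hs.1, hs.2]
          simp; omega
        simp only [coe_filter, Set.mem_ofPred_eq, signVectors, Fintype.mem_piFinset]
        refine ⟨fun i => by split_ifs <;> simp, ?_⟩
        simp [sum_ite, hs.2, hcompl]
      · intro s _ t _ hst
        ext i
        have := congrFun hst i
        dsimp only at this
        split_ifs at this with hs ht ht <;> norm_num at this <;> simp [hs, ht]

theorem sum_abs_sum_signVectors_succ_ge (n : ℕ) :
    2 * ∑ ε ∈ signVectors n, |∑ i, ε i| + 2 * #{ε ∈ signVectors n | ∑ i, ε i = 0} ≤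
      ∑ ε ∈ signVectors (n + 1), |∑ i, ε i| := by
  have hpoint (x : ℝ) : 2 * |x| + 2 * (if x = 0 then 1 else 0) ≤ |1 + x| + |-1 + x| := by
    split_ifs with hx
    · norm_num [hx]
    · have htri := abs_add_le (1 + x) (-1 + x)
      rw [show 1 + x + (-1 + x) = 2 * x by ring, abs_mul, abs_two] at htri
      linarith
  rw [sum_signVectors_succ, mul_sum, ← sum_boole, mul_sum, ← sum_add_distrib]
  simp only [Fin.sum_cons]
  exact sum_le_sum fun ε _ => hpoint _

theorem pow_mul_sum_centralBinom_div_four_pow_le_sum_abs (n : ℕ) :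
    2 ^ n * ∑ m ∈ range ((n + 1) / 2), (m.centralBinom : ℝ) / 4 ^ m ≤
      ∑ ε ∈ signVectors n, |∑ i, ε i| := by
  induction n with
  | zero => simp
  | succ n ih =>
    refine le_trans ?_ (sum_abs_sum_signVectors_succ_ge n)
    rcases Nat.even_or_odd' n with ⟨m, rfl | rfl⟩
    · have hzero : (m.centralBinom : ℝ) ≤ #{ε ∈ signVectors (2 * m) | ∑ i, ε i = 0} := by
        exact_mod_cast centralBinom_le_card_sum_eq_zero m
      have hterm : (2 : ℝ) ^ (2 * m) * ((m.centralBinom : ℝ) / 4 ^ m) = m.centralBinom := by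
        rw [pow_mul]; norm_num [mul_div_cancel₀]
      rw [show (2 * m + 1) / 2 = m by omega] at ih
      rw [show (2 * m + 1 + 1) / 2 = m + 1 by omega, sum_range_succ, pow_succ]
      linarith
    · rw [show (2 * m + 1 + 1 + 1) / 2 = (2 * m + 1 + 1) / 2 by omega, pow_succ]
      linarith [Nat.cast_nonneg (α := ℝ) #{ε ∈ signVectors (2 * m + 1) | ∑ i, ε i = 0}]

theorem sqrt_div_sqrt_two_le_inv_pow_mul_sum_abs (n : ℕ) :
    √n / √2 ≤ (2 ^ n)⁻¹ * ∑ ε ∈ signVectors n, |∑ i, ε i| := by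
  rw [le_inv_mul_iff₀ (by positivity)]
  refine le_trans ?_ (pow_mul_sum_centralBinom_div_four_pow_le_sum_abs n)
  gcongr
  refine le_trans ?_ (Real.sqrt_le_sum_centralBinom_div_four_pow _)
  rw [← Real.sqrt_div' _ zero_le_two]
  gcongr
  rw [div_le_iff₀ zero_lt_two]
  exact_mod_cast (by omega : n ≤ (n + 1) / 2 * 2)

theorem Nat.div_lt_div_of_add_le {u v K : ℕ} (hK : 0 < K) (h : u + K ≤ v) : u / K < v / K := by
  calc u / K < u / K + 1 := Nat.lt_succ_self _
    _ = (u + K) / K := (Nat.add_div_right u hK).symm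
    _ ≤ v / K := Nat.div_le_div_right h

theorem Equiv.Perm.symm_add_le_symm_of_abs_sub_le {T M K τ : ℕ} {σ : Equiv.Perm (Fin T)}
    (hσ : ∀ t : Fin T, |((σ t : ℕ) : ℤ) - ((t : ℕ) : ℤ)| ≤ (M : ℤ)) (hτ : K + 2 * M ≤ τ)
    {s t : Fin T} (hst : (s : ℕ) + τ ≤ t) : (σ.symm s : ℕ) + K ≤ σ.symm t := by
  have hs := hσ (σ.symm s)
  have ht := hσ (σ.symm t)
  rw [Equiv.apply_symm_apply, abs_le] at hs ht
  omega

theorem ollp_delayed_feedback_regret_lower_bound_general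
    (n K M τ : ℕ) (hK : 1 ≤ K)
    (hMτ : 3 * M ≤ τ) (hKτ : 3 * K ≤ τ)
    (T : ℕ)
    (σ : Equiv.Perm (Fin T))
    (hσ : ∀ t : Fin T, |((σ t : ℕ) : ℤ) - ((t : ℕ) : ℤ)| ≤ (M : ℤ))
    (blk : Fin T → Fin n) (hblk : ∀ u : Fin T, (blk u : ℕ) = (u : ℕ) / K)
    (w : Fin T → (Fin n → ℝ) → ℝ)
    (hmeas : ∀ (t : Fin T) (ε ε' : Fin n → ℝ),
      (∀ s : Fin T, (s : ℕ) + τ ≤ (t : ℕ) →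
        ε (blk (σ.symm s)) = ε' (blk (σ.symm s))) →
      w t ε = w t ε') :
    (K : ℝ) * Real.sqrt n / Real.sqrt 2 ≤
      ((2 : ℝ) ^ n)⁻¹ *
        ∑ ε ∈ Fintype.piFinset (fun _ : Fin n => ({-1, 1} : Finset ℝ)),
          ((∑ t : Fin T, ε (blk (σ.symm t)) * w t ε)
            + (K : ℝ) * |∑ i : Fin n, ε i|) := by
  have hsep (t s : Fin T) (hst : (s : ℕ) + τ ≤ t) : blk (σ.symm s) ≠ blk (σ.symm t) := by
    intro hblk_eq
    have hlt := Nat.div_lt_div_of_add_le hK (σ.symm_add_le_symm_of_abs_sub_le hσ (by omega) hst)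
    rw [← hblk, ← hblk, hblk_eq] at hlt
    exact hlt.false
  have hlearner (t : Fin T) :
      ∑ ε ∈ Fintype.piFinset (fun _ : Fin n => ({-1, 1} : Finset ℝ)),
        ε (blk (σ.symm t)) * w t ε = 0 :=
    sum_piFinset_mul_eq_zero_of_neg_mem (by simp) _ fun ε =>
      hmeas t _ _ fun s hs => Function.update_of_ne (hsep t s hs) _ _
  rw [sum_add_distrib, sum_comm, sum_eq_zero fun t _ => hlearner t, zero_add, ← mul_sum,
    mul_left_comm, mul_div_assoc]
  exact mul_le_mul_of_nonneg_left (sqrt_div_sqrt_two_le_inv_pow_mul_sum_abs n) K.cast_nonneg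

/-- **Theorem 2 of the paper: `Ω(√(τT))` regret lower bound for OLLP with
permutation window `M ≤ τ/3`.** The `T = n·K` rounds are divided into `n` blocks
of size `K ≤ τ/3`; all losses in block `i` are `w ↦ ε_i·w` with a uniformly
random sign `ε_i`; the learner applies a local permutation `σ` with window
`M ≤ τ/3`, so the loss played at time `t` has sign `ε (blk (σ⁻¹ t))`; feedback is
delayed by `τ` rounds, so the prediction `w_t ∈ [-1,1]` depends only on block
signs revealed by times `s ≤ t - τ`. Then the expected regret is at least
`K·√n/√2`. -/
theorem ollp_delayed_feedback_regret_lower_bound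
    (n K M τ : ℕ) (hn : 1 ≤ n) (hK : 1 ≤ K) (hM : 1 ≤ M) (hτ : 1 ≤ τ)
    (hMτ : 3 * M ≤ τ) (hKτ : 3 * K ≤ τ)
    (T : ℕ) (hT : T = n * K)
    (σ : Equiv.Perm (Fin T))
    (hσ : ∀ t : Fin T, |((σ t : ℕ) : ℤ) - ((t : ℕ) : ℤ)| ≤ (M : ℤ))
    (blk : Fin T → Fin n) (hblk : ∀ u : Fin T, (blk u : ℕ) = (u : ℕ) / K)
    (w : Fin T → (Fin n → ℝ) → ℝ)
    (hrange : ∀ t ε, w t ε ∈ Set.Icc (-1 : ℝ) 1)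
    (hmeas : ∀ (t : Fin T) (ε ε' : Fin n → ℝ),
      (∀ s : Fin T, (s : ℕ) + τ ≤ (t : ℕ) →
        ε (blk (σ.symm s)) = ε' (blk (σ.symm s))) →
      w t ε = w t ε') :
    (K : ℝ) * Real.sqrt n / Real.sqrt 2 ≤
      ((2 : ℝ) ^ n)⁻¹ *
        ∑ ε ∈ Fintype.piFinset (fun _ : Fin n => ({-1, 1} : Finset ℝ)),
          ((∑ t : Fin T, ε (blk (σ.symm t)) * w t ε)
            + (K : ℝ) * |∑ i : Fin n, ε i|) :=
  ollp_delayed_feedback_regret_lower_bound_general n K M τ hK hMτ hKτ T σ hσ blk hblk w hmeas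
end
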